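/- arXiv:2506.22479 — 3 statements merged into one kernel-verified Lean document; each statement's English description precedes it below -/
import Mathlib

section
/- Let β₁, β₂ ∈ [0,1) with β₂ > 0 and γ := β₁²/β₂ < 1. Let T ≥ 1 and g_1,…,g_T ∈ ℝ, not all zero. Define m_T = (1-β₁) ∑_{k=1}^T β₁^{T-k} g_k and v_T = (1-β₂) ∑_{j=1}^T β₂^{T-j} g_j², and assume v_T > 0. Then m_T² / v_T ≤ ((1-β₁)² / ((1-β₂)(1-γ))) · T. -/
/-- Key ratio bound in the proof of Theorem A.5 (path bound for HGM):
for the closed-form exponential moving averages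
`m_T = (1-β₁) ∑_{k=1}^T β₁^(T-k) g_k` and `v_T = (1-β₂) ∑_{j=1}^T β₂^(T-j) g_j²`
with `v_T > 0` (the `g`'s not all zero) and `γ = β₁²/β₂ < 1`,
`m_T² / v_T ≤ ((1-β₁)² / ((1-β₂)(1-γ))) T`. -/
theorem ema_ratio_bound
    (β₁ β₂ γ : ℝ) (hβ₁0 : 0 ≤ β₁) (hβ₁1 : β₁ < 1)
    (hβ₂0 : 0 < β₂) (hβ₂1 : β₂ < 1)
    (hγdef : γ = β₁ ^ 2 / β₂) (hγ : γ < 1)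
    (T : ℕ) (hT : 1 ≤ T) (g : ℕ → ℝ)
    (hgne : ∃ k ∈ Finset.Icc 1 T, g k ≠ 0)
    (mT vT : ℝ)
    (hmT : mT = (1 - β₁) * ∑ k ∈ Finset.Icc 1 T, β₁ ^ (T - k) * g k)
    (hvT : vT = (1 - β₂) * ∑ j ∈ Finset.Icc 1 T, β₂ ^ (T - j) * (g j) ^ 2)
    (hvpos : 0 < vT) :
    mT ^ 2 / vT ≤ (1 - β₁) ^ 2 / ((1 - β₂) * (1 - γ)) * T := by
  have hγ0 : 0 ≤ γ := by
    rw [hγdef]; positivity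
  have hγβ : γ * β₂ = β₁ ^ 2 := by
    rw [hγdef]; field_simp
  -- Cauchy–Schwarz
  set a : ℕ → ℝ := fun k => Real.sqrt γ ^ (T - k) with ha
  set b : ℕ → ℝ := fun k => Real.sqrt β₂ ^ (T - k) * g k with hb
  have hab : ∀ k, a k * b k = β₁ ^ (T - k) * g k := by
    intro k
    have : Real.sqrt γ * Real.sqrt β₂ = β₁ := by
      rw [← Real.sqrt_mul hγ0, hγβ, Real.sqrt_sq hβ₁0]
    simp only [ha, hb, ← mul_assoc, ← mul_pow, this]
  have ha2 : ∀ k, a k ^ 2 = γ ^ (T - k) := by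
    intro k
    show (Real.sqrt γ ^ (T - k)) ^ 2 = γ ^ (T - k)
    rw [← pow_mul, mul_comm (T - k) 2, pow_mul, Real.sq_sqrt hγ0]
  have hb2 : ∀ k, b k ^ 2 = β₂ ^ (T - k) * g k ^ 2 := by
    intro k
    show (Real.sqrt β₂ ^ (T - k) * g k) ^ 2 = β₂ ^ (T - k) * g k ^ 2
    rw [mul_pow, ← pow_mul, mul_comm (T - k) 2, pow_mul, Real.sq_sqrt hβ₂0.le]
  have hCS := Finset.sum_mul_sq_le_sq_mul_sq (Finset.Icc 1 T) a b
  rw [show (∑ k ∈ Finset.Icc 1 T, a k * b k) = ∑ k ∈ Finset.Icc 1 T, β₁ ^ (T - k) * g k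
      from Finset.sum_congr rfl fun k _ => hab k] at hCS
  rw [show (∑ k ∈ Finset.Icc 1 T, a k ^ 2) = ∑ k ∈ Finset.Icc 1 T, γ ^ (T - k)
      from Finset.sum_congr rfl fun k _ => ha2 k] at hCS
  rw [show (∑ k ∈ Finset.Icc 1 T, b k ^ 2) = ∑ k ∈ Finset.Icc 1 T, β₂ ^ (T - k) * g k ^ 2
      from Finset.sum_congr rfl fun k _ => hb2 k] at hCS
  -- geometric sum bound
  have hgeom : (∑ k ∈ Finset.Icc 1 T, γ ^ (T - k)) ≤ 1 / (1 - γ) := by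
    have h1γ : 0 < 1 - γ := by linarith
    have h1 : (∑ k ∈ Finset.Icc 1 T, γ ^ (T - k)) = ∑ i ∈ Finset.range T, γ ^ i := by
      rw [show Finset.Icc 1 T = Finset.Ico 1 (T + 1) from (Finset.Ico_add_one_right_eq_Icc 1 T).symm,
        Finset.sum_Ico_eq_sum_range]
      simp only [Nat.add_sub_cancel]
      rw [← Finset.sum_range_reflect]
      apply Finset.sum_congr rfl
      intro i hi
      simp only [Finset.mem_range] at hi
      congr 1
      omega
    rw [h1, geom_sum_eq (by linarith : γ ≠ 1) T,
      show (γ ^ T - 1) / (γ - 1) = (1 - γ ^ T) / (1 - γ) by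
        rw [div_eq_div_iff (by linarith) (by linarith)]; ring]
    have hpow : 0 ≤ γ ^ T := by positivity
    exact (div_le_div_iff_of_pos_right h1γ).mpr (by linarith)
  set V : ℝ := ∑ j ∈ Finset.Icc 1 T, β₂ ^ (T - j) * g j ^ 2 with hV
  have hVpos : 0 < V := by
    have : vT = (1 - β₂) * V := hvT
    nlinarith
  have hgsum : (0:ℝ) ≤ ∑ k ∈ Finset.Icc 1 T, γ ^ (T - k) := by positivity
  -- combine
  rw [div_le_iff₀ hvpos]
  have hmT2 : mT ^ 2 = (1 - β₁) ^ 2 * (∑ k ∈ Finset.Icc 1 T, β₁ ^ (T - k) * g k) ^ 2 := by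
    rw [hmT]; ring
  have hstep : mT ^ 2 ≤ (1 - β₁) ^ 2 * ((1 / (1 - γ)) * V) := by
    rw [hmT2]
    have h2 : (∑ k ∈ Finset.Icc 1 T, β₁ ^ (T - k) * g k) ^ 2 ≤ (1 / (1 - γ)) * V :=
      le_trans hCS (mul_le_mul_of_nonneg_right hgeom hVpos.le)
    exact mul_le_mul_of_nonneg_left h2 (by positivity)
  have hT1 : (1:ℝ) ≤ T := by exact_mod_cast hT
  have hC : (1 - β₁) ^ 2 * ((1 / (1 - γ)) * V)
      ≤ (1 - β₁) ^ 2 / ((1 - β₂) * (1 - γ)) * T * vT := by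
    rw [hvT]
    have h1γ : 0 < 1 - γ := by linarith
    have h1β₂ : 0 < 1 - β₂ := by linarith
    have heq : (1 - β₁) ^ 2 / ((1 - β₂) * (1 - γ)) * ↑T * ((1 - β₂) * V)
        = (1 - β₁) ^ 2 * ((↑T / (1 - γ)) * V) := by
      field_simp
    rw [heq]
    have hdiv : 1 / (1 - γ) ≤ (↑T : ℝ) / (1 - γ) := by
      gcongr
    exact mul_le_mul_of_nonneg_left
      (mul_le_mul_of_nonneg_right hdiv hVpos.le) (by positivity)
  linarith
end

section
/- Let β₁, β₂ ∈ [0,1) with β₂ > 0 and γ := β₁²/β₂ < 1. Let T ≥ 1 and g_1,…,g_T ∈ ℝ. Define m_T = (1-β₁) ∑_{k=1}^T β₁^{T-k} g_k, v_T = (1-β₂) ∑_{j=1}^T β₂^{T-j} g_j², m̂_T = m_T/(1-β₁^T), v̂_T = v_T/(1-β₂^T), and assume v_T > 0. Then m̂_T² / v̂_T ≤ T / ((1-β₁)² (1-γ)). -/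
set_option maxHeartbeats 1600000


/-- Bias-corrected ratio bound in the proof of Theorem A.5: with
`m̂_T = m_T/(1-β₁^T)` and `v̂_T = v_T/(1-β₂^T)` the bias-corrected closed-form
exponential moving averages and `γ = β₁²/β₂ < 1`,
`m̂_T² / v̂_T ≤ T / ((1-β₁)² (1-γ))`. -/
theorem bias_corrected_ratio_bound
    (β₁ β₂ γ : ℝ) (hβ₁0 : 0 ≤ β₁) (hβ₁1 : β₁ < 1)
    (hβ₂0 : 0 < β₂) (hβ₂1 : β₂ < 1)
    (hγdef : γ = β₁ ^ 2 / β₂) (hγ : γ < 1)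
    (T : ℕ) (hT : 1 ≤ T) (g : ℕ → ℝ)
    (mT vT mhatT vhatT : ℝ)
    (hmT : mT = (1 - β₁) * ∑ k ∈ Finset.Icc 1 T, β₁ ^ (T - k) * g k)
    (hvT : vT = (1 - β₂) * ∑ j ∈ Finset.Icc 1 T, β₂ ^ (T - j) * (g j) ^ 2)
    (hmhat : mhatT = mT / (1 - β₁ ^ T))
    (hvhat : vhatT = vT / (1 - β₂ ^ T))
    (hvpos : 0 < vT) :
    mhatT ^ 2 / vhatT ≤ (T : ℝ) / ((1 - β₁) ^ 2 * (1 - γ)) := by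
  have hγ0 : 0 ≤ γ := by rw [hγdef]; positivity
  have h1γ : 0 < 1 - γ := by linarith
  have h1β₁ : 0 < 1 - β₁ := by linarith
  have h1β₂ : 0 < 1 - β₂ := by linarith
  set S : ℝ := ∑ k ∈ Finset.Icc 1 T, β₁ ^ (T - k) * g k with hS
  set S₂ : ℝ := ∑ j ∈ Finset.Icc 1 T, β₂ ^ (T - j) * (g j) ^ 2 with hS₂
  have hS₂pos : 0 < S₂ := by
    rcases (mul_pos_iff.mp (hvT ▸ hvpos)) with ⟨_, h⟩ | ⟨h, _⟩
    · exact h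
    · linarith
  -- Cauchy-Schwarz
  have cs : S ^ 2 ≤ (∑ k ∈ Finset.Icc 1 T, γ ^ (T - k)) * S₂ := by
    refine Finset.sum_sq_le_sum_mul_sum_of_sq_eq_mul _
      (fun i _ => by positivity) (fun i _ => by positivity) (fun i _ => ?_)
    have hb : β₁ ^ 2 = γ * β₂ := by
      rw [hγdef]; field_simp
    calc (β₁ ^ (T - i) * g i) ^ 2 = (β₁ ^ 2) ^ (T - i) * g i ^ 2 := by ring
      _ = γ ^ (T - i) * (β₂ ^ (T - i) * g i ^ 2) := by rw [hb, mul_pow]; ring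
  -- reindexing
  have hgeom : ∀ (x : ℝ),
      ∑ k ∈ Finset.Icc 1 T, x ^ (T - k) = ∑ i ∈ Finset.range T, x ^ i := by
    intro x
    rw [show Finset.Icc 1 T = Finset.Ico 1 (T + 1) from (Finset.Ico_add_one_right_eq_Icc 1 T).symm,
      Finset.sum_Ico_eq_sum_range, ← Finset.sum_range_reflect]
    simp only [Nat.add_sub_cancel]
    exact Finset.sum_congr rfl fun i hi => by
      simp only [Finset.mem_range] at hi; congr 1; omega
  have hsumγ : ∑ k ∈ Finset.Icc 1 T, γ ^ (T - k) ≤ 1 / (1 - γ) := by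
    rw [hgeom γ, le_div_iff₀ h1γ]
    have hgm := geom_sum_mul γ T
    nlinarith [pow_nonneg hγ0 T]
  have key : (1 - γ) * S ^ 2 ≤ S₂ := by
    have h2 : (∑ k ∈ Finset.Icc 1 T, γ ^ (T - k)) * S₂ ≤ (1 / (1 - γ)) * S₂ :=
      mul_le_mul_of_nonneg_right hsumγ hS₂pos.le
    have h3 : S ^ 2 ≤ (1 / (1 - γ)) * S₂ := le_trans cs h2
    rw [← le_div_iff₀' h1γ]
    calc S ^ 2 ≤ (1 / (1 - γ)) * S₂ := h3
      _ = S₂ / (1 - γ) := by ring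
  -- denominator facts
  have hβ₁T : β₁ ^ T ≤ β₁ := by
    calc β₁ ^ T ≤ β₁ ^ 1 := pow_le_pow_of_le_one hβ₁0 hβ₁1.le hT
      _ = β₁ := pow_one β₁
  have hA : 1 - β₁ ≤ 1 - β₁ ^ T := by linarith
  have hApos : 0 < 1 - β₁ ^ T := lt_of_lt_of_le h1β₁ hA
  have hBpos : 0 < 1 - β₂ ^ T := by
    have : β₂ ^ T < 1 := pow_lt_one₀ hβ₂0.le hβ₂1 (by omega)
    linarith
  have hB : 1 - β₂ ^ T ≤ (T : ℝ) * (1 - β₂) := by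
    have h1 : (∑ i ∈ Finset.range T, β₂ ^ i) * (β₂ - 1) = β₂ ^ T - 1 := geom_sum_mul β₂ T
    have h2 : ∑ i ∈ Finset.range T, β₂ ^ i ≤ (T : ℝ) := by
      calc ∑ i ∈ Finset.range T, β₂ ^ i ≤ ∑ i ∈ Finset.range T, (1 : ℝ) :=
            Finset.sum_le_sum fun i _ => pow_le_one₀ hβ₂0.le hβ₂1.le
        _ = (T : ℝ) := by simp
    nlinarith
  -- assemble
  have hTpos : (0 : ℝ) < T := by exact_mod_cast hT
  have hLHS : mhatT ^ 2 / vhatT =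
      ((1 - β₁) * S) ^ 2 * (1 - β₂ ^ T) / ((1 - β₁ ^ T) ^ 2 * ((1 - β₂) * S₂)) := by
    rw [hmhat, hvhat, hmT, hvT]
    field_simp

  rw [hLHS, div_le_div_iff₀ (by positivity) (by positivity)]
  -- goal: ((1-β₁)*S)^2 * (1-β₂^T) * ((1-β₁)^2*(1-γ)) ≤ T * ((1-β₁^T)^2 * ((1-β₂)*S₂))
  have ha1 : (1 - β₁) ≤ 1 := by linarith
  have step1 : ((1 - β₁) * S) ^ 2 * (1 - β₂ ^ T) * ((1 - β₁) ^ 2 * (1 - γ))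
      = ((1 - γ) * S ^ 2) * ((1 - β₁) ^ 4 * (1 - β₂ ^ T)) := by ring
  have step2 : ((1 - γ) * S ^ 2) * ((1 - β₁) ^ 4 * (1 - β₂ ^ T))
      ≤ S₂ * ((1 - β₁) ^ 4 * (1 - β₂ ^ T)) :=
    mul_le_mul_of_nonneg_right key (by positivity)
  have ha4 : (1 - β₁) ^ 4 ≤ (1 - β₁ ^ T) ^ 2 := by
    have e1 : (1 - β₁) ^ 2 ≤ 1 := by nlinarith
    have e2 : (1 - β₁) ^ 2 ≤ (1 - β₁ ^ T) ^ 2 := by nlinarith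
    nlinarith
  have step3 : S₂ * ((1 - β₁) ^ 4 * (1 - β₂ ^ T))
      ≤ S₂ * ((1 - β₁ ^ T) ^ 2 * ((T : ℝ) * (1 - β₂))) := by
    apply mul_le_mul_of_nonneg_left _ hS₂pos.le
    apply mul_le_mul ha4 hB hBpos.le (by positivity)
  calc ((1 - β₁) * S) ^ 2 * (1 - β₂ ^ T) * ((1 - β₁) ^ 2 * (1 - γ))
      = ((1 - γ) * S ^ 2) * ((1 - β₁) ^ 4 * (1 - β₂ ^ T)) := step1
    _ ≤ S₂ * ((1 - β₁) ^ 4 * (1 - β₂ ^ T)) := step2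
    _ ≤ S₂ * ((1 - β₁ ^ T) ^ 2 * ((T : ℝ) * (1 - β₂))) := step3
    _ = (T : ℝ) * ((1 - β₁ ^ T) ^ 2 * ((1 - β₂) * S₂)) := by ring
end

section
/- Let d ≥ 1, let β₁, β₂ ∈ [0,1) with β₂ > 0 and γ := β₁²/β₂ < 1, let α > 0, ε ≥ 0, and let h : ℕ → ℝ. Let g : ℕ → ℝ^d be any sequence of gradient vectors. For each coordinate i, define m_{0,i} = v_{0,i} = 0, m_{t,i} = β₁ m_{t-1,i} + (1-β₁) g_{t,i}, v_{t,i} = β₂ v_{t-1,i} + (1-β₂) g_{t,i}², m̂_{t,i} = m_{t,i}/(1-β₁^t), v̂_{t,i} = v_{t,i}/(1-β₂^t), and assume v_{t,i} > 0 for all t ∈ {1,…,T} and all i. Let s : ℕ → ℝ satisfy |s_t| ≤ 1, set η_t = α h(t) exp(γ s_t), and define the iterates θ_{t+1,i} = θ_{t,i} − η_t · m̂_{t,i}/(√(v̂_{t,i}) + ε), with X_t = ‖θ_{t+1} − θ_t‖₂ (and X_0 = 0). Then ∑_{t=0}^T X_t² ≤ (α² exp(2γ) d / ((1-β₁)² (1-β₁²/β₂)))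 · ∑_{t=1}^T t · h(t)². -/
lemma hgm_step (β₁ β₂ γ M G V : ℝ) (hβ₂0 : 0 < β₂) (hβ₂1 : β₂ < 1)
    (hγdef : β₁ ^ 2 = γ * β₂)
    (IH : (1-β₂)*(1-γ)*M^2 ≤ (1-β₁)^2*V) :
    (1-β₂)*(1-γ)*(β₁*M+(1-β₁)*G)^2 ≤ (1-β₁)^2*(β₂*V+(1-β₂)*G^2) := by
  have key : β₂ * ((1-β₁)^2*(β₂*V+(1-β₂)*G^2) - (1-β₂)*(1-γ)*(β₁*M+(1-β₁)*G)^2)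
      = β₂^2 * ((1-β₁)^2*V - (1-β₂)*(1-γ)*M^2)
        + (1-β₂) * (β₂*(1-γ)*M - β₁*(1-β₁)*G)^2
        + (-(1-β₂)*((1-β₁)^2*G^2 + β₂*(1-γ)*M^2)) * (β₁^2 - γ*β₂) := by
    ring
  rw [hγdef] at key
  have h1 : 0 ≤ β₂ * ((1-β₁)^2*(β₂*V+(1-β₂)*G^2) - (1-β₂)*(1-γ)*(β₁*M+(1-β₁)*G)^2) := by
    rw [key]
    have := sq_nonneg (β₂*(1-γ)*M - β₁*(1-β₁)*G)
    nlinarith [sq_nonneg β₂, sub_nonneg.mpr hβ₂1.le]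
  nlinarith [h1, hβ₂0]

set_option maxHeartbeats 1000000 in
/-- Theorem A.5 (path bound for HGM): with per-coordinate bias-corrected moment
estimates, hindsight signal `|s t| ≤ 1`, modulated stepsize
`η t = α h(t) exp(γ s t)` and updates
`θ (t+1) i = θ t i − η t · m̂_{t,i}/(√(v̂_{t,i}) + ε)`, the squared path length
satisfies `∑_{t=0}^T X_t² ≤ (α² exp(2γ) d / ((1-β₁)²(1-β₁²/β₂))) ∑_{t=1}^T t h(t)²`. -/
theorem hgm_path_bound
    (d T : ℕ) (hd : 1 ≤ d)
    (β₁ β₂ γ α ε : ℝ)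
    (hβ₁0 : 0 ≤ β₁) (hβ₁1 : β₁ < 1)
    (hβ₂0 : 0 < β₂) (hβ₂1 : β₂ < 1)
    (hγdef : γ = β₁ ^ 2 / β₂) (hγ : γ < 1)
    (hα : 0 < α) (hε : 0 ≤ ε)
    (h : ℕ → ℝ)
    (g m v : ℕ → Fin d → ℝ)
    (hm0 : ∀ i, m 0 i = 0) (hv0 : ∀ i, v 0 i = 0)
    (hm : ∀ t ≥ 1, ∀ i, m t i = β₁ * m (t - 1) i + (1 - β₁) * g t i)
    (hv : ∀ t ≥ 1, ∀ i, v t i = β₂ * v (t - 1) i + (1 - β₂) * (g t i) ^ 2)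
    (hvpos : ∀ t ∈ Finset.Icc 1 T, ∀ i, 0 < v t i / (1 - β₂ ^ t))
    (s : ℕ → ℝ) (hs : ∀ t, |s t| ≤ 1)
    (η : ℕ → ℝ) (hη : ∀ t, η t = α * h t * Real.exp (γ * s t))
    (θ : ℕ → EuclideanSpace ℝ (Fin d))
    (hupdate : ∀ t ∈ Finset.Icc 1 T, ∀ i,
      θ (t + 1) i = θ t i -
        η t * (m t i / (1 - β₁ ^ t)) / (Real.sqrt (v t i / (1 - β₂ ^ t)) + ε))
    (X : ℕ → ℝ) (hX0 : X 0 = 0)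
    (hX : ∀ t ∈ Finset.Icc 1 T, X t = ‖θ (t + 1) - θ t‖) :
    ∑ t ∈ Finset.range (T + 1), (X t) ^ 2 ≤
      α ^ 2 * Real.exp (2 * γ) * d / ((1 - β₁) ^ 2 * (1 - β₁ ^ 2 / β₂)) *
        ∑ t ∈ Finset.Icc 1 T, (t : ℝ) * (h t) ^ 2 := by
  have hγ0 : 0 ≤ γ := hγdef ▸ div_nonneg (sq_nonneg β₁) hβ₂0.le
  have h1γ : (0:ℝ) < 1 - γ := by linarith
  have h1β₁ : (0:ℝ) < 1 - β₁ := by linarith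
  have hb12 : β₁ ^ 2 = γ * β₂ := by rw [hγdef]; field_simp
  -- moment bound by induction
  have hmv : ∀ i t, (1-β₂)*(1-γ)*(m t i)^2 ≤ (1-β₁)^2 * v t i := by
    intro i t
    induction t with
    | zero => simp [hm0, hv0]
    | succ n ih =>
        rw [hm (n+1) (by omega) i, hv (n+1) (by omega) i]
        simp only [Nat.add_sub_cancel]
        exact hgm_step β₁ β₂ γ (m n i) (g (n+1) i) (v n i) hβ₂0 hβ₂1 hb12 ih
  -- per-step bound
  have hstep : ∀ t ∈ Finset.Icc 1 T, (X t)^2 ≤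
      α ^ 2 * Real.exp (2 * γ) * d / ((1 - β₁) ^ 2 * (1 - γ)) * ((t:ℝ) * (h t)^2) := by
    intro t ht
    obtain ⟨ht1, htT⟩ := Finset.mem_Icc.mp ht
    have htR : (1:ℝ) ≤ (t:ℝ) := by exact_mod_cast ht1
    have hb : (0:ℝ) < 1 - β₂ ^ t := by
      have : β₂ ^ t < 1 := pow_lt_one₀ hβ₂0.le hβ₂1 (by omega)
      linarith
    have ha : (1:ℝ) - β₁ ≤ 1 - β₁ ^ t := by
      have : β₁ ^ t ≤ β₁ := pow_le_of_le_one hβ₁0 hβ₁1.le (by omega)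
      linarith
    have ha0 : (0:ℝ) < 1 - β₁ ^ t := lt_of_lt_of_le h1β₁ ha
    have hbern : 1 - β₂ ^ t ≤ (t:ℝ) * (1 - β₂) := by
      have h2 := one_add_mul_le_pow (a := β₂ - 1) (by linarith) t
      have h3 : (1 + (β₂ - 1)) ^ t = β₂ ^ t := by norm_num
      rw [h3] at h2
      nlinarith
    -- per-coordinate bound
    have hcoord : ∀ i : Fin d, (θ (t+1) i - θ t i)^2 ≤
        (α ^ 2 * Real.exp (2*γ) * (h t)^2) * ((t:ℝ) / ((1 - β₁)^2 * (1 - γ))) := by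
      intro i
      have hvi := hvpos t ht i
      have hvt : 0 < v t i := by
        have := mul_pos hvi hb
        rwa [div_mul_cancel₀ _ hb.ne'] at this
      have hsq : 0 < Real.sqrt (v t i / (1 - β₂ ^ t)) := Real.sqrt_pos.mpr hvi
      have hD0 : 0 < Real.sqrt (v t i / (1 - β₂ ^ t)) + ε := by positivity
      have hDsq : v t i / (1 - β₂ ^ t) ≤ (Real.sqrt (v t i / (1 - β₂ ^ t)) + ε)^2 := by
        nlinarith [Real.sq_sqrt hvi.le, hsq.le]
      -- key polynomial inequality
      have hkey2 : (m t i)^2 * ((1-β₁)^2*(1-γ)) * (1 - β₂^t) ≤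
          ((t:ℝ) * v t i) * (1-β₁^t)^2 := by
        calc (m t i)^2 * ((1-β₁)^2*(1-γ)) * (1 - β₂^t)
            ≤ (m t i)^2 * ((1-β₁)^2*(1-γ)) * ((t:ℝ)*(1-β₂)) := by
              apply mul_le_mul_of_nonneg_left hbern (by positivity)
          _ = ((t:ℝ)*(1-β₁)^2) * ((1-β₂)*(1-γ)*(m t i)^2) := by ring
          _ ≤ ((t:ℝ)*(1-β₁)^2) * ((1-β₁)^2 * v t i) := by
              apply mul_le_mul_of_nonneg_left (hmv i t) (by positivity)
          _ = ((t:ℝ) * v t i) * ((1-β₁)^2*(1-β₁)^2) := by ring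
          _ ≤ ((t:ℝ) * v t i) * (1-β₁^t)^2 := by
              apply mul_le_mul_of_nonneg_left ?_ (by positivity)
              have h1 : (1-β₁)^2 ≤ (1-β₁^t)^2 := pow_le_pow_left₀ h1β₁.le ha 2
              have h2 : (1-β₁)^2 ≤ 1 := by nlinarith
              nlinarith [sq_nonneg (1-β₁^t)]
      have hfr : (m t i)^2 / (1-β₁^t)^2 * ((1-β₁)^2*(1-γ)) ≤
          (t:ℝ) * (v t i / (1-β₂^t)) := by
        rw [div_mul_eq_mul_div, mul_div_assoc', div_le_div_iff₀ (by positivity) hb]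
        calc (m t i)^2 * ((1-β₁)^2*(1-γ)) * (1 - β₂^t) ≤ ((t:ℝ) * v t i) * (1-β₁^t)^2 := hkey2
          _ = (t:ℝ) * v t i * (1-β₁^t)^2 := by ring
      have hratio : (m t i / (1-β₁^t))^2 / (v t i / (1-β₂^t)) ≤
          (t:ℝ) / ((1 - β₁)^2 * (1 - γ)) := by
        rw [div_le_div_iff₀ hvi (by positivity), div_pow]
        exact hfr
      have hchain : (m t i / (1-β₁^t) / (Real.sqrt (v t i / (1 - β₂ ^ t)) + ε))^2 ≤
          (t:ℝ) / ((1 - β₁)^2 * (1 - γ)) := by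
        rw [div_pow]
        calc (m t i / (1-β₁^t))^2 / (Real.sqrt (v t i / (1 - β₂ ^ t)) + ε)^2
            ≤ (m t i / (1-β₁^t))^2 / (v t i / (1-β₂^t)) :=
              div_le_div_of_nonneg_left (sq_nonneg _) hvi hDsq
          _ ≤ (t:ℝ) / ((1 - β₁)^2 * (1 - γ)) := hratio
      have hη2 : (η t)^2 ≤ α ^ 2 * Real.exp (2*γ) * (h t)^2 := by
        have hexp : Real.exp (γ * s t) ^ 2 ≤ Real.exp (2*γ) := by
          rw [sq, ← Real.exp_add]
          apply Real.exp_le_exp.mpr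
          have hs1 := (abs_le.mp (hs t)).2
          nlinarith
        calc (η t)^2 = α^2 * (h t)^2 * Real.exp (γ * s t)^2 := by rw [hη]; ring
          _ ≤ α^2 * (h t)^2 * Real.exp (2*γ) := by
              apply mul_le_mul_of_nonneg_left hexp (by positivity)
          _ = α ^ 2 * Real.exp (2*γ) * (h t)^2 := by ring
      have hdiff : θ (t+1) i - θ t i =
          -(η t * (m t i / (1-β₁^t) / (Real.sqrt (v t i / (1 - β₂ ^ t)) + ε))) := by
        rw [hupdate t ht i]; ring
      rw [hdiff]
      have : (-(η t * (m t i / (1-β₁^t) / (Real.sqrt (v t i / (1 - β₂ ^ t)) + ε))))^2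
          = (η t)^2 * (m t i / (1-β₁^t) / (Real.sqrt (v t i / (1 - β₂ ^ t)) + ε))^2 := by
        ring
      rw [this]
      exact mul_le_mul hη2 hchain (sq_nonneg _) (by positivity)
    -- sum coordinates
    have hXt : X t ^ 2 = ∑ i, (θ (t+1) i - θ t i)^2 := by
      rw [hX t ht, EuclideanSpace.norm_eq, Real.sq_sqrt (by positivity)]
      simp [PiLp.sub_apply, Real.norm_eq_abs, sq_abs]
    rw [hXt]
    calc ∑ i, (θ (t+1) i - θ t i)^2
        ≤ ∑ _i : Fin d, (α ^ 2 * Real.exp (2*γ) * (h t)^2) * ((t:ℝ) / ((1 - β₁)^2 * (1 - γ))) :=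
          Finset.sum_le_sum (fun i _ => hcoord i)
      _ = (d:ℝ) * ((α ^ 2 * Real.exp (2*γ) * (h t)^2) * ((t:ℝ) / ((1 - β₁)^2 * (1 - γ)))) := by
          simp [Finset.sum_const, Finset.card_univ, nsmul_eq_mul]
      _ = α ^ 2 * Real.exp (2 * γ) * d / ((1 - β₁) ^ 2 * (1 - γ)) * ((t:ℝ) * (h t)^2) := by
          field_simp
  -- assemble
  have hgoal : (1 : ℝ) - β₁ ^ 2 / β₂ = 1 - γ := by rw [hγdef]
  rw [hgoal]
  have hset : Finset.range (T+1) = insert 0 (Finset.Icc 1 T) := by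
    ext x
    simp only [Finset.mem_range, Finset.mem_insert, Finset.mem_Icc]
    omega
  rw [hset, Finset.sum_insert (by simp), hX0]
  have : (0:ℝ)^2 = 0 := by norm_num
  rw [this, zero_add]
  calc ∑ t ∈ Finset.Icc 1 T, X t ^ 2
      ≤ ∑ t ∈ Finset.Icc 1 T,
          α ^ 2 * Real.exp (2 * γ) * d / ((1 - β₁) ^ 2 * (1 - γ)) * ((t:ℝ) * (h t)^2) :=
        Finset.sum_le_sum hstep
    _ = α ^ 2 * Real.exp (2 * γ) * d / ((1 - β₁) ^ 2 * (1 - γ)) *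
          ∑ t ∈ Finset.Icc 1 T, (t:ℝ) * (h t)^2 := by
        rw [Finset.mul_sum]
end
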